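/- arXiv:1011.0376 — 8 statements merged into one kernel-verified Lean document; each statement's English description precedes it below -/
import Mathlib

section
/- Let R be a commutative noetherian ring and let S₁ and S₂ be Serre classes of R-modules. Then the extension class (S₁, S₂) is closed under submodules and quotient modules: if 0 → L → M → N → 0 is a short exact sequence of R-modules and M belongs to (S₁, S₂), then both L and N belong to (S₁, S₂). -/
universe u v

/-- The extension class `(S₁, S₂)`: modules `M` admitting a submodule `N ∈ S₁`
with `M/N ∈ S₂`. -/
def ExtensionClass {R : Type u} [CommRing R]
    (S₁ S₂ : ∀ (M : Type v) [AddCommGroup M] [Module R M], Prop)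
    (M : Type v) [AddCommGroup M] [Module R M] : Prop :=
  ∃ N : Submodule R M, S₁ N ∧ S₂ (M ⧸ N)

/-- A Serre class of `R`-modules: closed under isomorphism, contains the zero module, and is
closed under submodules, quotient modules and extensions. -/
structure IsSerreClass (R : Type u) [CommRing R]
    (S : ∀ (M : Type v) [AddCommGroup M] [Module R M], Prop) : Prop where
  isoClosed : ∀ (M N : Type v) [AddCommGroup M] [Module R M] [AddCommGroup N] [Module R N],
      (M ≃ₗ[R] N) → S M → S N
  zeroMem : ∀ (M : Type v) [AddCommGroup M] [Module R M], Subsingleton M → S M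
  subClosed : ∀ (M : Type v) [AddCommGroup M] [Module R M] (N : Submodule R M), S M → S N
  quotClosed : ∀ (M : Type v) [AddCommGroup M] [Module R M] (N : Submodule R M), S M → S (M ⧸ N)
  extClosed : ∀ (L M N : Type v) [AddCommGroup L] [Module R L] [AddCommGroup M] [Module R M]
      [AddCommGroup N] [Module R N] (f : L →ₗ[R] M) (g : M →ₗ[R] N),
      Function.Injective f → Function.Surjective g →
      LinearMap.range f = LinearMap.ker g → S L → S N → S M


lemma IsSerreClass.of_injective {R : Type u} [CommRing R]
    {S : ∀ (M : Type v) [AddCommGroup M] [Module R M], Prop} (h : IsSerreClass R S)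
    {A B : Type v} [AddCommGroup A] [Module R A] [AddCommGroup B] [Module R B]
    (f : A →ₗ[R] B) (hf : Function.Injective f) (hB : S B) : S A :=
  h.isoClosed _ _ (LinearEquiv.ofInjective f hf).symm
    (h.subClosed B (LinearMap.range f) hB)

lemma IsSerreClass.of_surjective {R : Type u} [CommRing R]
    {S : ∀ (M : Type v) [AddCommGroup M] [Module R M], Prop} (h : IsSerreClass R S)
    {A B : Type v} [AddCommGroup A] [Module R A] [AddCommGroup B] [Module R B]
    (f : A →ₗ[R] B) (hf : Function.Surjective f) (hA : S A) : S B :=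
  h.isoClosed _ _ (f.quotKerEquivOfSurjective hf)
    (h.quotClosed A (LinearMap.ker f) hA)

/-- The extension class `(S₁, S₂)` of two Serre classes is closed under submodules and
quotient modules: if `0 → L → M → N → 0` is exact and `M ∈ (S₁, S₂)`, then
`L ∈ (S₁, S₂)` and `N ∈ (S₁, S₂)`. -/
theorem extensionClass_closed_under_submodules_and_quotients
    {R : Type u} [CommRing R] [IsNoetherianRing R]
    (S₁ S₂ : ∀ (M : Type v) [AddCommGroup M] [Module R M], Prop)
    (h₁ : IsSerreClass R S₁) (h₂ : IsSerreClass R S₂)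
    (L M N : Type v) [AddCommGroup L] [Module R L] [AddCommGroup M] [Module R M]
    [AddCommGroup N] [Module R N]
    (f : L →ₗ[R] M) (g : M →ₗ[R] N)
    (hf : Function.Injective f) (hg : Function.Surjective g)
    (hfg : LinearMap.range f = LinearMap.ker g)
    (hM : ExtensionClass S₁ S₂ M) :
    ExtensionClass S₁ S₂ L ∧ ExtensionClass S₁ S₂ N := by
  obtain ⟨P, hP1, hP2⟩ := hM
  constructor
  · refine ⟨P.comap f, ?_, ?_⟩
    · refine h₁.of_injective (f.restrict (p := P.comap f) (q := P) fun x hx => hx) ?_ hP1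
      intro a b hab
      exact Subtype.ext (hf (congrArg Subtype.val hab))
    · have hker : P.comap f ≤ LinearMap.ker (P.mkQ.comp f) := by
        intro x hx
        simpa [LinearMap.mem_ker, Submodule.Quotient.mk_eq_zero] using hx
      refine h₂.of_injective ((P.comap f).liftQ (P.mkQ.comp f) hker) ?_ hP2
      rw [← LinearMap.ker_eq_bot, Submodule.ker_liftQ_eq_bot]
      intro x hx
      have := (LinearMap.mem_ker).mp hx
      simpa [Submodule.Quotient.mk_eq_zero] using this
  · refine ⟨P.map g, ?_, ?_⟩
    · refine h₁.of_surjective (g.restrict (p := P) (q := P.map g)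
        (fun x hx => Submodule.mem_map_of_mem hx)) ?_ hP1
      rintro ⟨y, x, hx, rfl⟩
      exact ⟨⟨x, hx⟩, rfl⟩
    · have hle : P ≤ LinearMap.ker ((P.map g).mkQ.comp g) := by
        intro x hx
        simp [LinearMap.mem_ker, Submodule.Quotient.mk_eq_zero,
          Submodule.mem_map_of_mem hx]
      refine h₂.of_surjective (P.liftQ ((P.map g).mkQ.comp g) hle) ?_ hP2
      intro y
      obtain ⟨m, rfl⟩ := Submodule.mkQ_surjective _ y
      obtain ⟨x, rfl⟩ := hg m
      exact ⟨P.mkQ x, rfl⟩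
end

section
/- Let R be a commutative noetherian ring, M an R-module, and W a specialization closed subset of Spec(R). Then Ass_R(M/Γ_W(M)) ⊆ Ass_R(M). -/
/-!
Write `P = Ann(x̄)` for the image `x̄` of some `x ∈ M` in `M/Γ_W(M)`. If `P` were in `W`, every
prime `q ⊇ Ann(x)` would lie in `W`: either `q ⊇ P` and specialization closedness applies, or some
`a ∈ P \ q` has `q ∈ Supp(R·ax)` with `ax ∈ Γ_W(M)`. Then `x ∈ Γ_W(M)`, which is absurd. So `P ∉ W`,
hence `P ∉ Supp Γ_W(M)`, and as `P·x ⊆ Γ_W(M)` is finitely generated, a single `t ∉ P` kills it;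
then `Ann(tx) = P`.
-/

universe u v

open Module Submodule

section

variable {R : Type u} [CommRing R] {M : Type v} [AddCommGroup M] [Module R M]

theorem mem_support_span_singleton_iff {p : PrimeSpectrum R} {x : M} :
    p ∈ support R (R ∙ x) ↔ (R ∙ x).annihilator ≤ p.asIdeal :=
  mem_support_iff_of_finite

theorem mem_support_span_singleton_smul {p : PrimeSpectrum R} {x : M} {a : R}
    (ha : a ∉ p.asIdeal) (hx : p ∈ support R (R ∙ x)) : p ∈ support R (R ∙ a • x) := by
  rw [mem_support_span_singleton_iff] at hx ⊢
  intro r hr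
  rw [mem_annihilator_span_singleton, smul_smul] at hr
  exact (p.isPrime.mem_or_mem (hx ((mem_annihilator_span_singleton x _).mpr hr))).resolve_right ha

theorem support_subset_of_support_span_singleton_subset {W : Set (PrimeSpectrum R)}
    {G : Submodule R M} (hG : ∀ x ∈ G, support R (R ∙ x) ⊆ W) : support R G ⊆ W := by
  intro p hp
  obtain ⟨m, hm⟩ := mem_support_iff_exists_annihilator.mp hp
  refine hG m m.2 (mem_support_span_singleton_iff.mpr fun r hr => hm ?_)
  rw [mem_annihilator_span_singleton] at hr ⊢
  exact Subtype.ext hr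

theorem exists_notMem_forall_smul_smul_eq_zero [IsNoetherianRing R] {N : Submodule R M}
    {p : PrimeSpectrum R} (hN : p ∉ support R N) {I : Ideal R} {x : M}
    (hx : ∀ a ∈ I, a • x ∈ N) : ∃ t ∉ p.asIdeal, ∀ a ∈ I, t • a • x = 0 := by
  have hK : I • (R ∙ x) ≤ N := smul_le.mpr fun a ha y hy => by
    obtain ⟨r, rfl⟩ := mem_span_singleton.mp hy
    rw [smul_comm]
    exact N.smul_mem r (hx a ha)
  have : Module.Finite R ↥(I • (R ∙ x)) :=
    Module.Finite.iff_fg.mpr (FG.smul (IsNoetherian.noetherian I) (fg_span_singleton x))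
  have hp : p ∉ support R ↥(I • (R ∙ x)) := fun h =>
    hN (support_subset_of_injective (inclusion hK) (inclusion_injective hK) h)
  rw [mem_support_iff_of_finite, SetLike.not_le_iff_exists] at hp
  obtain ⟨t, ht, htp⟩ := hp
  refine ⟨t, htp, fun a ha => ?_⟩
  have := mem_annihilator.mp ht ⟨a • x, smul_mem_smul ha (mem_span_singleton_self x)⟩
  exact congrArg Subtype.val this

theorem mem_associatedPrimes_of_mem_quotient_of_notMem_support [IsNoetherianRing R]
    {N : Submodule R M} {p : PrimeSpectrum R} (hp : p.asIdeal ∈ associatedPrimes R (M ⧸ N))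
    (hN : p ∉ support R N) : p.asIdeal ∈ associatedPrimes R M := by
  obtain ⟨-, x', hx'⟩ := isAssociatedPrime_iff.mp hp
  obtain ⟨x, rfl⟩ := N.mkQ_surjective x'
  have hcolon (r : R) : r ∈ p.asIdeal ↔ r • x ∈ N := by
    rw [hx', mem_colon_singleton, mem_bot, mkQ_apply, ← Quotient.mk_smul, Quotient.mk_eq_zero]
  obtain ⟨t, htp, ht⟩ :=
    exists_notMem_forall_smul_smul_eq_zero hN fun a ha => (hcolon a).mp ha
  refine isAssociatedPrime_iff.mpr ⟨p.isPrime, t • x, le_antisymm ?_ ?_⟩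
  · intro r hr
    rw [mem_colon_singleton, mem_bot, smul_comm]
    exact ht r hr
  · intro r hr
    rw [mem_colon_singleton, mem_bot] at hr
    have hrt : r * t ∈ p.asIdeal := by
      rw [hcolon, mul_smul, hr]
      exact N.zero_mem
    exact (p.isPrime.mem_or_mem hrt).resolve_right htp

theorem notMem_associatedPrimes_quotient_of_mem {W : Set (PrimeSpectrum R)}
    (hW : ∀ p q : PrimeSpectrum R, p ∈ W → p.asIdeal ≤ q.asIdeal → q ∈ W) {G : Submodule R M}
    (hG : ∀ x : M, x ∈ G ↔ support R (R ∙ x) ⊆ W) {p : PrimeSpectrum R} (hp : p ∈ W) :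
    p.asIdeal ∉ associatedPrimes R (M ⧸ G) := by
  rintro ⟨hprime, x', hx'⟩
  obtain ⟨x, rfl⟩ := G.mkQ_surjective x'
  have hcolon (r : R) (hr : r ∈ p.asIdeal) : ∃ n : ℕ, r ^ n • x ∈ G := by
    rw [hx', Ideal.mem_radical_iff] at hr
    simpa only [mem_colon_singleton, mem_bot, mkQ_apply, ← Quotient.mk_smul,
      Quotient.mk_eq_zero] using hr
  have hxG : x ∈ G := by
    refine (hG x).mpr fun q hq => ?_
    by_cases hpq : p.asIdeal ≤ q.asIdeal
    · exact hW p q hp hpq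
    · obtain ⟨a, hap, haq⟩ := SetLike.not_le_iff_exists.mp hpq
      obtain ⟨n, hn⟩ := hcolon a hap
      have han : a ^ n ∉ q.asIdeal := fun h => haq (q.isPrime.mem_of_pow_mem n h)
      exact (hG _).mp hn (mem_support_span_singleton_smul han hq)
  apply hprime.ne_top
  rw [hx', (G.mkQ_apply x).trans ((Quotient.mk_eq_zero G).mpr hxG)]
  simp

end

/-- For a specialization closed subset `W ⊆ Spec R` and the submodule
`Γ_W(M) = {x ∈ M | Supp(Rx) ⊆ W}`, one has `Ass(M/Γ_W(M)) ⊆ Ass(M)`. -/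
theorem associatedPrimes_quotient_gamma_subset
    {R : Type u} [CommRing R] [IsNoetherianRing R]
    (W : Set (PrimeSpectrum R))
    (hW : ∀ p q : PrimeSpectrum R, p ∈ W → p.asIdeal ≤ q.asIdeal → q ∈ W)
    (M : Type v) [AddCommGroup M] [Module R M]
    (G : Submodule R M)
    (hG : ∀ x : M, x ∈ G ↔ Module.support R ↥(Submodule.span R ({x} : Set M)) ⊆ W) :
    associatedPrimes R (M ⧸ G) ⊆ associatedPrimes R M := by
  intro P hP
  let p : PrimeSpectrum R := ⟨P, hP.isPrime⟩
  refine mem_associatedPrimes_of_mem_quotient_of_notMem_support (p := p) hP fun hpG => ?_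
  have hpW : p ∈ W :=
    support_subset_of_support_span_singleton_subset (fun x hx => (hG x).mp hx) hpG
  exact notMem_associatedPrimes_quotient_of_mem hW hG hpW hP
end

section
/- Let R be a commutative noetherian ring and let W₁, W₂ be specialization closed subsets of Spec(R). For an R-module M, the following are equivalent: (i) Supp_R(M) ⊆ W₁ ∪ W₂; (ii) there exists a submodule N of M such that Supp_R(N) ⊆ W₁ and Supp_R(M/N) ⊆ W₂. -/
/-!
Take `N = Γ_{W₁}(M)`, the elements of `M` whose cyclic submodule is supported in `W₁`; its
support lies in `W₁` by construction. If `p ∈ Supp (M ⧸ N)`, then (R noetherian) some associated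
prime `q = ann ȳ ⊆ p` of `M ⧸ N` lies in `Supp M ⊆ W₁ ∪ W₂`. It cannot lie in `W₁`: for
`p' ∉ W₁` specialization closedness gives `b ∈ q \ p'`, and `b • y ∈ N` is killed by some
`r ∉ p'`, so `r * b ∉ p'` kills `y`; thus `y ∈ N` and `ȳ = 0`. Hence `q ∈ W₂` and so `p ∈ W₂`.
The converse is `Supp M = Supp N ∪ Supp (M ⧸ N)`.
-/

universe u v

namespace Module

variable {R : Type*} [CommRing R] {M : Type*} [AddCommGroup M] [Module R M]

theorem mem_support_of_isAssociatedPrime {q : PrimeSpectrum R}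
    (hq : IsAssociatedPrime q.asIdeal M) : q ∈ support R M := by
  obtain ⟨x, hx⟩ := hq.eq_radical_colon
  refine mem_support_iff_exists_annihilator.mpr ⟨x, fun r hr => hx ▸ Ideal.le_radical ?_⟩
  rwa [Submodule.mem_colon_singleton, Submodule.mem_bot,
    ← Submodule.mem_annihilator_span_singleton]

theorem exists_isAssociatedPrime_le_of_mem_support [IsNoetherianRing R]
    {p : PrimeSpectrum R} (hp : p ∈ support R M) :
    ∃ q : PrimeSpectrum R, IsAssociatedPrime q.asIdeal M ∧ q ≤ p := by
  obtain ⟨m, hm⟩ := mem_support_iff_exists_annihilator.mp hp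
  obtain ⟨q, hq, hqp⟩ := Ideal.exists_minimalPrimes_le hm
  have hqm : IsAssociatedPrime q (R ∙ m) :=
    associatedPrimes.minimalPrimes_annihilator_subset_associatedPrimes R (R ∙ m) hq
  exact ⟨⟨q, hqm.isPrime⟩, hqm.map_of_injective _ (R ∙ m).injective_subtype, hqp⟩

variable (R M) in
/-- `Γ_W(M)`: an element `m` lies in it iff `m` vanishes in `M_p` for every `p ∉ W`, i.e. iff
`Supp (R ∙ m) ⊆ W`. -/
def supportedIn (W : Set (PrimeSpectrum R)) : Submodule R M :=
  ⨅ (p : PrimeSpectrum R) (_ : p ∉ W), Submodule.torsion' R M p.asIdeal.primeCompl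

variable {W : Set (PrimeSpectrum R)}

theorem mem_supportedIn_iff {m : M} :
    m ∈ supportedIn R M W ↔ ∀ p ∉ W, ∃ r ∉ p.asIdeal, r • m = 0 := by
  simp only [supportedIn, Submodule.mem_iInf, Submodule.mem_torsion'_iff, Subtype.exists,
    Submonoid.mk_smul, Ideal.mem_primeCompl_iff, exists_prop]

theorem support_supportedIn_subset : support R (supportedIn R M W) ⊆ W := by
  intro p hp
  by_contra hpW
  refine (notMem_support_iff'.mpr fun n => ?_) hp
  obtain ⟨r, hr, hrn⟩ := mem_supportedIn_iff.mp n.2 p hpW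
  exact ⟨r, hr, Subtype.ext hrn⟩

theorem mem_supportedIn_of_smul_mem (hW : IsUpperSet W) {q : PrimeSpectrum R} (hq : q ∈ W)
    {m : M} (hm : ∀ b ∈ q.asIdeal, b • m ∈ supportedIn R M W) : m ∈ supportedIn R M W := by
  refine mem_supportedIn_iff.mpr fun p hpW => ?_
  obtain ⟨b, hbq, hbp⟩ :=
    SetLike.not_le_iff_exists.mp fun hqp : q.asIdeal ≤ p.asIdeal => hpW (hW hqp hq)
  obtain ⟨r, hrp, hr⟩ := mem_supportedIn_iff.mp (hm b hbq) p hpW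
  exact ⟨r * b, p.isPrime.mul_notMem hrp hbp, by rw [mul_smul, hr]⟩

theorem notMem_of_isAssociatedPrime_quotient_supportedIn [IsNoetherianRing R]
    (hW : IsUpperSet W) {q : PrimeSpectrum R}
    (hq : IsAssociatedPrime q.asIdeal (M ⧸ supportedIn R M W)) : q ∉ W := by
  intro hqW
  obtain ⟨-, x, hx⟩ := isAssociatedPrime_iff.mp hq
  obtain ⟨m, rfl⟩ := Submodule.mkQ_surjective _ x
  have hm : m ∈ supportedIn R M W := mem_supportedIn_of_smul_mem hW hqW fun b hb => by
    rw [hx, Submodule.mem_colon_singleton, Submodule.mem_bot] at hb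
    rwa [← Submodule.Quotient.mk_eq_zero, Submodule.Quotient.mk_smul]
  refine q.isPrime.ne_top ((Ideal.eq_top_iff_one _).mpr ?_)
  rw [hx, Submodule.mem_colon_singleton, Submodule.mem_bot, one_smul, Submodule.mkQ_apply,
    Submodule.Quotient.mk_eq_zero]
  exact hm

theorem support_quotient_supportedIn_subset [IsNoetherianRing R] {W' : Set (PrimeSpectrum R)}
    (hW : IsUpperSet W) (hW' : IsUpperSet W') (hM : support R M ⊆ W ∪ W') :
    support R (M ⧸ supportedIn R M W) ⊆ W' := by
  intro p hp
  obtain ⟨q, hq, hqp⟩ := exists_isAssociatedPrime_le_of_mem_support hp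
  have hqM : q ∈ support R M :=
    support_subset_of_surjective _ (Submodule.mkQ_surjective _)
      (mem_support_of_isAssociatedPrime hq)
  exact hW' hqp ((hM hqM).resolve_left (notMem_of_isAssociatedPrime_quotient_supportedIn hW hq))

end Module

open Module in
/-- For specialization closed subsets `W₁, W₂ ⊆ Spec R`, an `R`-module `M` satisfies
`Supp M ⊆ W₁ ∪ W₂` iff there is a submodule `N ⊆ M` with `Supp N ⊆ W₁` and
`Supp (M/N) ⊆ W₂`. -/
theorem support_subset_union_iff_exists_submodule
    {R : Type u} [CommRing R] [IsNoetherianRing R]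
    (W₁ W₂ : Set (PrimeSpectrum R))
    (hW₁ : ∀ p q : PrimeSpectrum R, p ∈ W₁ → p.asIdeal ≤ q.asIdeal → q ∈ W₁)
    (hW₂ : ∀ p q : PrimeSpectrum R, p ∈ W₂ → p.asIdeal ≤ q.asIdeal → q ∈ W₂)
    (M : Type v) [AddCommGroup M] [Module R M] :
    Module.support R M ⊆ W₁ ∪ W₂ ↔
      ∃ N : Submodule R M,
        Module.support R ↥N ⊆ W₁ ∧ Module.support R (M ⧸ N) ⊆ W₂ := by
  constructor
  · intro hM
    exact ⟨supportedIn R M W₁, support_supportedIn_subset,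
      support_quotient_supportedIn_subset (fun p q hpq hp => hW₁ p q hp hpq)
        (fun p q hpq hp => hW₂ p q hp hpq) hM⟩
  · rintro ⟨N, hN, hMN⟩
    rw [support_of_exact (LinearMap.exact_subtype_mkQ N) N.injective_subtype N.mkQ_surjective]
    exact Set.union_subset_union hN hMN
end

section
/- Let R be a commutative noetherian ring, S₁ and S₂ Serre classes of R-modules, and 0 → L → M → N → 0 a short exact sequence of R-modules. If L belongs to S₁ and N belongs to the extension class (S₁, S₂), then M belongs to (S₁, S₂). -/
universe u v

/-- If `0 → L → M → N → 0` is exact, `L ∈ S₁` and `N ∈ (S₁, S₂)`, then `M ∈ (S₁, S₂)`. -/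
theorem extensionClass_of_left_mem
    {R : Type u} [CommRing R] [IsNoetherianRing R]
    (S₁ S₂ : ∀ (M : Type v) [AddCommGroup M] [Module R M], Prop)
    (h₁ : IsSerreClass R S₁) (h₂ : IsSerreClass R S₂)
    (L M N : Type v) [AddCommGroup L] [Module R L] [AddCommGroup M] [Module R M]
    [AddCommGroup N] [Module R N]
    (f : L →ₗ[R] M) (g : M →ₗ[R] N)
    (hf : Function.Injective f) (hg : Function.Surjective g)
    (hfg : LinearMap.range f = LinearMap.ker g)
    (hL : S₁ L) (hN : ExtensionClass S₁ S₂ N) :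
    ExtensionClass S₁ S₂ M := by
  obtain ⟨P, hP₁, hP₂⟩ := hN
  refine ⟨P.comap g, ?_, ?_⟩
  · -- 0 → L → g⁻¹(P) → P → 0 is exact
    have hfQ : ∀ x : L, f x ∈ P.comap g := by
      intro x
      have : f x ∈ LinearMap.ker g := hfg ▸ LinearMap.mem_range_self f x
      simp [Submodule.mem_comap, LinearMap.mem_ker.mp this]
    set f' : L →ₗ[R] P.comap g := f.codRestrict _ hfQ with hf'def
    set g' : P.comap g →ₗ[R] P := g.restrict (fun x hx => hx) with hg'def
    refine h₁.extClosed L (P.comap g) P f' g' ?_ ?_ ?_ hL hP₁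
    · intro a b hab
      exact hf (congrArg Subtype.val hab)
    · rintro ⟨y, hy⟩
      obtain ⟨x, hx⟩ := hg y
      exact ⟨⟨x, by simp [Submodule.mem_comap, hx, hy]⟩, Subtype.ext hx⟩
    · ext ⟨x, hx⟩
      constructor
      · rintro ⟨a, ha⟩
        have : g x = g (f a) := by
          have := congrArg Subtype.val ha
          simp only [hg'def, hf'def] at *
          rw [← this]; rfl
        have hker : f a ∈ LinearMap.ker g := hfg ▸ LinearMap.mem_range_self f a
        have : g x = 0 := by rw [this]; exact hker
        simpa [hg'def, LinearMap.mem_ker, LinearMap.restrict_apply, Subtype.ext_iff] using this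
      · intro h
        have hgx : g x = 0 := by
          simpa [hg'def, LinearMap.mem_ker, LinearMap.restrict_apply, Subtype.ext_iff] using h
        have : x ∈ LinearMap.range f := hfg ▸ LinearMap.mem_ker.mpr hgx
        obtain ⟨a, ha⟩ := this
        exact ⟨a, Subtype.ext (by simpa [hf'def] using ha)⟩
  · -- M ⧸ g⁻¹(P) ≃ N ⧸ P
    set φ : M →ₗ[R] N ⧸ P := P.mkQ.comp g with hφ
    have hφsurj : Function.Surjective φ := (Submodule.mkQ_surjective P).comp hg
    have hker : LinearMap.ker φ = P.comap g := by
      ext x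
      simp [hφ, LinearMap.mem_ker, Submodule.Quotient.mk_eq_zero, Submodule.mem_comap]
    have e : (M ⧸ P.comap g) ≃ₗ[R] (N ⧸ P) :=
      (Submodule.quotEquivOfEq _ _ hker.symm).trans (φ.quotKerEquivOfSurjective hφsurj)
    exact h₂.isoClosed _ _ e.symm hP₂
end

section
/- Let R be a commutative noetherian ring and let S₁ and S₂ be Serre classes of R-modules. The following are equivalent: (i) the extension class (S₁, S₂) is a Serre class (i.e., it is closed under extensions); (ii) (S₂, S₁) ⊆ (S₁, S₂). -/
universe u v

/-
Write `X = (S₁, S₂)`. If `X` is a Serre class, a module in `(S₂, S₁)` is an extension of a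
module of `S₁ ⊆ X` by one of `S₂ ⊆ X`, hence lies in `X`. Conversely, `X` is always closed
under isomorphisms, submodules and quotients, so only extensions matter. Via the
correspondence between submodules of `M ⧸ A` and submodules of `M` above `A`:
`(S₁, X) ⊆ X` and `(X, S₂) ⊆ X` because `S₁` and `S₂` are closed under extensions;
`(S₂, X) ⊆ X` because a filtration `P ≤ B ≤ M` with factors in `S₂, S₁, S₂` puts `B`
in `(S₂, S₁) ⊆ X` and then `M` in `(X, S₂)`; and `(X, X) ⊆ X` because if `A ≤ P ≤ M`
with `A ∈ S₁`, `P/A ∈ S₂` and `M/P ∈ X`, then `M/A ∈ (S₂, X)` and `M ∈ (S₁, X)`.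
-/

/-- Both sides are the subquotient `B/A`. -/
noncomputable def Submodule.quotientComapSubtypeEquivMapMkQ {R M : Type*} [CommRing R]
    [AddCommGroup M] [Module R M] (A B : Submodule R M) :
    (B ⧸ A.comap B.subtype) ≃ₗ[R] B.map A.mkQ :=
  (Submodule.quotEquivOfEq _ _ (by rw [LinearMap.ker_comp, Submodule.ker_mkQ])).trans
    ((A.mkQ ∘ₗ B.subtype).quotKerEquivRange.trans
      (LinearEquiv.ofEq _ _ (by rw [LinearMap.range_comp, Submodule.range_subtype])))

def IsIsoClosed (R : Type u) [CommRing R]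
    (S : ∀ (M : Type v) [AddCommGroup M] [Module R M], Prop) : Prop :=
  ∀ (M N : Type v) [AddCommGroup M] [Module R M] [AddCommGroup N] [Module R N],
    (M ≃ₗ[R] N) → S M → S N

section

variable {R : Type u} [CommRing R]
  {S S₁ S₂ : ∀ (M : Type v) [AddCommGroup M] [Module R M], Prop}
  {M N : Type v} [AddCommGroup M] [Module R M] [AddCommGroup N] [Module R N]

theorem IsIsoClosed.iff (hS : IsIsoClosed R S) (e : M ≃ₗ[R] N) : S M ↔ S N :=
  ⟨hS M N e, hS N M e.symm⟩

namespace IsSerreClass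

theorem isIsoClosed (h : IsSerreClass R S) : IsIsoClosed R S :=
  h.isoClosed

theorem of_injective_s10 (h : IsSerreClass R S) (f : M →ₗ[R] N) (hf : Function.Injective f)
    (hN : S N) : S M :=
  h.isoClosed _ _ (LinearEquiv.ofInjective f hf).symm (h.subClosed N _ hN)

theorem of_surjective_s10 (h : IsSerreClass R S) (f : M →ₗ[R] N) (hf : Function.Surjective f)
    (hM : S M) : S N :=
  h.isoClosed _ _ (f.quotKerEquivOfSurjective hf) (h.quotClosed M _ hM)

theorem quotient_of_ker_eq (h : IsSerreClass R S) (f : M →ₗ[R] N) {K : Submodule R M}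
    (hK : LinearMap.ker f = K) (hN : S N) : S (M ⧸ K) :=
  h.isoClosed _ _ ((Submodule.quotEquivOfEq _ _ hK).symm.trans f.quotKerEquivRange).symm
    (h.subClosed N _ hN)

theorem of_extensionClass (h : IsSerreClass R S) (hM : ExtensionClass S S M) : S M := by
  obtain ⟨P, hP, hMP⟩ := hM
  exact h.extClosed P M (M ⧸ P) P.subtype P.mkQ P.injective_subtype P.mkQ_surjective
    (by rw [Submodule.range_subtype, Submodule.ker_mkQ]) hP hMP

end IsSerreClass

namespace ExtensionClass

theorem of_exact {L : Type v} [AddCommGroup L] [Module R L]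
    (h₁ : IsIsoClosed R S₁) (h₂ : IsIsoClosed R S₂) (f : L →ₗ[R] M) (g : M →ₗ[R] N)
    (hf : Function.Injective f) (hg : Function.Surjective g)
    (hfg : LinearMap.range f = LinearMap.ker g) (hL : S₁ L) (hN : S₂ N) :
    ExtensionClass S₁ S₂ M :=
  ⟨LinearMap.range f, h₁ _ _ (LinearEquiv.ofInjective f hf) hL,
    h₂ _ _ ((Submodule.quotEquivOfEq _ _ hfg).trans (g.quotKerEquivOfSurjective hg)).symm hN⟩

theorem isIsoClosed (h₁ : IsIsoClosed R S₁) (h₂ : IsIsoClosed R S₂) :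
    IsIsoClosed R (ExtensionClass S₁ S₂) := by
  intro M N _ _ _ _ e ⟨P, hP, hMP⟩
  exact ⟨P.map (e : M →ₗ[R] N), h₁ _ _ (P.equivMapOfInjective _ e.injective) hP,
    h₂ _ _ (Submodule.Quotient.equiv P _ e rfl) hMP⟩

theorem of_left (h₁ : IsSerreClass R S₁) (h₂ : IsSerreClass R S₂) (hM : S₁ M) :
    ExtensionClass S₁ S₂ M :=
  ⟨⊤, h₁.isoClosed _ _ Submodule.topEquiv.symm hM,
    h₂.zeroMem _ (Submodule.Quotient.subsingleton_iff.mpr rfl)⟩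

theorem of_right (h₁ : IsSerreClass R S₁) (h₂ : IsSerreClass R S₂) (hM : S₂ M) :
    ExtensionClass S₁ S₂ M :=
  ⟨⊥, h₁.zeroMem _ inferInstance,
    h₂.isoClosed _ _ (Submodule.quotEquivOfEqBot ⊥ rfl).symm hM⟩

theorem submodule_iff (h₁ : IsIsoClosed R S₁) (Q : Submodule R M) :
    ExtensionClass S₁ S₂ Q ↔ ∃ A ≤ Q, S₁ A ∧ S₂ (Q ⧸ A.comap Q.subtype) := by
  constructor
  · rintro ⟨N, hN, hQN⟩
    refine ⟨N.map Q.subtype, Submodule.map_subtype_le Q N,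
      h₁ _ _ (N.equivMapOfInjective _ Q.injective_subtype) hN, ?_⟩
    rwa [Submodule.comap_map_eq_of_injective Q.injective_subtype]
  · rintro ⟨A, hAQ, hA, hQA⟩
    exact ⟨_, h₁ _ _ (Submodule.comapSubtypeEquivOfLe hAQ).symm hA, hQA⟩

theorem quotient_iff (h₁ : IsIsoClosed R S₁) (h₂ : IsIsoClosed R S₂) (A : Submodule R M) :
    ExtensionClass S₁ S₂ (M ⧸ A) ↔
      ∃ B, A ≤ B ∧ S₁ (B ⧸ A.comap B.subtype) ∧ S₂ (M ⧸ B) := by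
  constructor
  · rintro ⟨N, hN, hQN⟩
    obtain ⟨B, hAB, rfl⟩ : ∃ B, A ≤ B ∧ B.map A.mkQ = N :=
      ⟨N.comap A.mkQ, A.le_comap_mkQ N, Submodule.map_comap_eq_of_surjective A.mkQ_surjective N⟩
    exact ⟨B, hAB, (h₁.iff (A.quotientComapSubtypeEquivMapMkQ B)).2 hN,
      h₂ _ _ (A.quotientQuotientEquivQuotient B hAB) hQN⟩
  · rintro ⟨B, hAB, hB, hMB⟩
    exact ⟨B.map A.mkQ, h₁ _ _ (A.quotientComapSubtypeEquivMapMkQ B) hB,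
      (h₂.iff (A.quotientQuotientEquivQuotient B hAB)).2 hMB⟩

theorem absorb_left (h₁ : IsSerreClass R S₁) (h₂ : IsIsoClosed R S₂)
    (hM : ExtensionClass S₁ (ExtensionClass S₁ S₂) M) : ExtensionClass S₁ S₂ M := by
  obtain ⟨A, hA, hMA⟩ := hM
  obtain ⟨D, hAD, hDA, hMD⟩ := (quotient_iff h₁.isIsoClosed h₂ A).1 hMA
  exact ⟨D, h₁.of_extensionClass ((submodule_iff h₁.isIsoClosed D).2 ⟨A, hAD, hA, hDA⟩),
    hMD⟩

theorem absorb_right (h₁ : IsIsoClosed R S₁) (h₂ : IsSerreClass R S₂)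
    (hM : ExtensionClass (ExtensionClass S₁ S₂) S₂ M) : ExtensionClass S₁ S₂ M := by
  obtain ⟨Q, hQ, hMQ⟩ := hM
  obtain ⟨A, hAQ, hA, hQA⟩ := (submodule_iff h₁ Q).1 hQ
  exact ⟨A, hA, h₂.of_extensionClass
    ((quotient_iff h₂.isIsoClosed h₂.isIsoClosed A).2 ⟨Q, hAQ, hQA, hMQ⟩)⟩

theorem absorb_swap (h₁ : IsIsoClosed R S₁) (h₂ : IsSerreClass R S₂)
    (hswap : ∀ (M : Type v) [AddCommGroup M] [Module R M],
      ExtensionClass S₂ S₁ M → ExtensionClass S₁ S₂ M)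
    (hM : ExtensionClass S₂ (ExtensionClass S₁ S₂) M) : ExtensionClass S₁ S₂ M := by
  obtain ⟨P, hP, hMP⟩ := hM
  obtain ⟨B, hPB, hBP, hMB⟩ := (quotient_iff h₁ h₂.isIsoClosed P).1 hMP
  exact absorb_right h₁ h₂
    ⟨B, hswap B ((submodule_iff h₂.isIsoClosed B).2 ⟨P, hPB, hP, hBP⟩), hMB⟩

theorem absorb_self (h₁ : IsSerreClass R S₁) (h₂ : IsSerreClass R S₂)
    (hswap : ∀ (M : Type v) [AddCommGroup M] [Module R M],
      ExtensionClass S₂ S₁ M → ExtensionClass S₁ S₂ M)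
    (hM : ExtensionClass (ExtensionClass S₁ S₂) (ExtensionClass S₁ S₂) M) :
    ExtensionClass S₁ S₂ M := by
  obtain ⟨P, hP, hMP⟩ := hM
  obtain ⟨A, hAP, hA, hPA⟩ := (submodule_iff h₁.isIsoClosed P).1 hP
  have hMA : ExtensionClass S₂ (ExtensionClass S₁ S₂) (M ⧸ A) :=
    (quotient_iff h₂.isIsoClosed (isIsoClosed h₁.isIsoClosed h₂.isIsoClosed) A).2
      ⟨P, hAP, hPA, hMP⟩
  exact absorb_left h₁ h₂.isIsoClosed ⟨A, hA, absorb_swap h₁.isIsoClosed h₂ hswap hMA⟩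

theorem submodule (h₁ : IsSerreClass R S₁) (h₂ : IsSerreClass R S₂) (P : Submodule R M)
    (hM : ExtensionClass S₁ S₂ M) : ExtensionClass S₁ S₂ P := by
  obtain ⟨N, hN, hMN⟩ := hM
  have hinj : Function.Injective
      (P.subtype.restrict fun _ hx => hx : N.comap P.subtype →ₗ[R] N) :=
    (LinearMap.injective_restrict_iff _).2 (by rw [Submodule.ker_subtype]; exact disjoint_bot_right)
  exact ⟨N.comap P.subtype, h₁.of_injective_s10 _ hinj hN,
    h₂.quotient_of_ker_eq (N.mkQ ∘ₗ P.subtype)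
      (by rw [LinearMap.ker_comp, Submodule.ker_mkQ]) hMN⟩

theorem quotient (h₁ : IsSerreClass R S₁) (h₂ : IsSerreClass R S₂) (P : Submodule R M)
    (hM : ExtensionClass S₁ S₂ M) : ExtensionClass S₁ S₂ (M ⧸ P) := by
  obtain ⟨N, hN, hMN⟩ := hM
  exact (quotient_iff h₁.isIsoClosed h₂.isIsoClosed P).2 ⟨N ⊔ P, le_sup_right,
    h₁.isoClosed _ _ (LinearMap.quotientInfEquivSupQuotient N P) (h₁.quotClosed N _ hN),
    h₂.of_surjective_s10 (Submodule.factor le_sup_left) (Submodule.factor_surjective _) hMN⟩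

theorem isSerreClass (h₁ : IsSerreClass R S₁) (h₂ : IsSerreClass R S₂)
    (hswap : ∀ (M : Type v) [AddCommGroup M] [Module R M],
      ExtensionClass S₂ S₁ M → ExtensionClass S₁ S₂ M) :
    IsSerreClass R (ExtensionClass S₁ S₂) where
  isoClosed := isIsoClosed h₁.isIsoClosed h₂.isIsoClosed
  zeroMem M _ _ hM := of_left h₁ h₂ (h₁.zeroMem M hM)
  subClosed _ _ _ P := submodule h₁ h₂ P
  quotClosed _ _ _ P := quotient h₁ h₂ P
  extClosed _ _ _ _ _ _ _ _ _ f g hf hg hfg hL hN := absorb_self h₁ h₂ hswap <|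
    of_exact (isIsoClosed h₁.isIsoClosed h₂.isIsoClosed)
      (isIsoClosed h₁.isIsoClosed h₂.isIsoClosed) f g hf hg hfg hL hN

end ExtensionClass

end

theorem extensionClass_isSerreClass_iff_general
    {R : Type u} [CommRing R]
    (S₁ S₂ : ∀ (M : Type v) [AddCommGroup M] [Module R M], Prop)
    (h₁ : IsSerreClass R S₁) (h₂ : IsSerreClass R S₂) :
    IsSerreClass R (ExtensionClass S₁ S₂) ↔
      (∀ (M : Type v) [AddCommGroup M] [Module R M],
        ExtensionClass S₂ S₁ M → ExtensionClass S₁ S₂ M) :=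
  ⟨fun hX _ _ _ ⟨P, hP, hMP⟩ =>
    hX.of_extensionClass ⟨P, .of_right h₁ h₂ hP, .of_left h₁ h₂ hMP⟩,
   ExtensionClass.isSerreClass h₁ h₂⟩

/-- The extension class `(S₁, S₂)` is a Serre class if and only if `(S₂, S₁) ⊆ (S₁, S₂)`. -/
theorem extensionClass_isSerreClass_iff
    {R : Type u} [CommRing R] [IsNoetherianRing R]
    (S₁ S₂ : ∀ (M : Type v) [AddCommGroup M] [Module R M], Prop)
    (h₁ : IsSerreClass R S₁) (h₂ : IsSerreClass R S₂) :
    IsSerreClass R (ExtensionClass S₁ S₂) ↔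
      (∀ (M : Type v) [AddCommGroup M] [Module R M],
        ExtensionClass S₂ S₁ M → ExtensionClass S₁ S₂ M) :=
  extensionClass_isSerreClass_iff_general S₁ S₂ h₁ h₂
end

section
/- Let R be a commutative noetherian ring, let S_fg denote the class of finitely generated R-modules, and let S be any Serre class of R-modules. Then the extension class (S_fg, S), i.e., the class of R-modules M admitting a finitely generated submodule N with M/N ∈ S, is a Serre class; in particular it is closed under extensions. -/
universe u v

theorem IsSerreClass.ofSurjective {R : Type u} [CommRing R]
    {S : ∀ (M : Type v) [AddCommGroup M] [Module R M], Prop} (hS : IsSerreClass R S)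
    {M N : Type v} [AddCommGroup M] [Module R M] [AddCommGroup N] [Module R N]
    (f : M →ₗ[R] N) (hf : Function.Surjective f) (hM : S M) : S N :=
  hS.isoClosed _ _ (f.quotKerEquivOfSurjective hf) (hS.quotClosed M _ hM)

theorem IsSerreClass.ofInjective {R : Type u} [CommRing R]
    {S : ∀ (M : Type v) [AddCommGroup M] [Module R M], Prop} (hS : IsSerreClass R S)
    {M N : Type v} [AddCommGroup M] [Module R M] [AddCommGroup N] [Module R N]
    (f : M →ₗ[R] N) (hf : Function.Injective f) (hN : S N) : S M :=
  hS.isoClosed _ _ (LinearEquiv.ofInjective f hf).symm (hS.subClosed N _ hN)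


/-- For any Serre class `S`, the extension class `(S_fg, S)` — the class of modules `M`
admitting a finitely generated submodule `N` with `M/N ∈ S` — is a Serre class. -/
theorem extensionClass_finite_isSerreClass
    {R : Type u} [CommRing R] [IsNoetherianRing R]
    (S : ∀ (M : Type v) [AddCommGroup M] [Module R M], Prop)
    (hS : IsSerreClass R S) :
    IsSerreClass R
      (ExtensionClass (fun (M : Type v) [AddCommGroup M] [Module R M] => Module.Finite R M) S) := by
  constructor
  · -- isoClosed
    rintro M N _ _ _ _ e ⟨A, hAfin, hAS⟩
    refine ⟨A.map (e : M →ₗ[R] N), ?_, ?_⟩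
    · exact Module.Finite.map A (e : M →ₗ[R] N)
    · exact hS.isoClosed _ _ (Submodule.Quotient.equiv A _ e rfl) hAS
  · -- zeroMem
    intro M _ _ h
    refine ⟨⊤, ?_, hS.zeroMem _ ?_⟩
    · infer_instance
    · infer_instance
  · -- subClosed
    rintro M _ _ P ⟨A, hAfin, hAS⟩
    haveI : IsNoetherian R A := inferInstance
    set A' : Submodule R P := A.comap P.subtype with hA'
    have hmem : ∀ x : A', P.subtype (A'.subtype x) ∈ A := fun x => x.2
    let φ : A' →ₗ[R] A := (P.subtype.comp A'.subtype).codRestrict A hmem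
    have hφ : Function.Injective φ := by
      intro x y hxy
      have := congrArg Subtype.val hxy
      exact Subtype.ext (Subtype.ext this)
    haveI : IsNoetherian R A' := isNoetherian_of_injective φ hφ
    refine ⟨A', inferInstance, ?_⟩
    have hle : A' ≤ A.comap P.subtype := le_rfl
    have hinj : Function.Injective (Submodule.mapQ A' A P.subtype hle) := by
      intro x y hxy
      obtain ⟨x, rfl⟩ := Submodule.Quotient.mk_surjective A' x
      obtain ⟨y, rfl⟩ := Submodule.Quotient.mk_surjective A' y
      rw [Submodule.Quotient.eq]
      have h2 : (x : M) - y ∈ A := by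
        have := (Submodule.Quotient.eq A).mp (by simpa [Submodule.mapQ_apply] using hxy)
        simpa using this
      simpa [hA', Submodule.mem_comap] using h2
    exact hS.ofInjective _ hinj hAS
  · -- quotClosed
    rintro M _ _ P ⟨A, hAfin, hAS⟩
    refine ⟨A.map P.mkQ, inferInstance, ?_⟩
    set Q := A.map P.mkQ with hQ
    have hker : A ≤ LinearMap.ker (Q.mkQ.comp P.mkQ) := by
      intro a ha
      simp only [LinearMap.mem_ker, LinearMap.comp_apply, Submodule.Quotient.mk_eq_zero,
        Submodule.mkQ_apply]
      exact ⟨a, ha, rfl⟩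
    refine hS.ofSurjective (Submodule.liftQ A _ hker) ?_ hAS
    intro y
    obtain ⟨x, hx⟩ := (Q.mkQ_surjective).comp (P.mkQ_surjective) y
    exact ⟨Submodule.Quotient.mk x, by simpa [Submodule.liftQ_apply] using hx⟩
  · -- extClosed
    rintro L M N _ _ _ _ _ _ f g hf hg hfg ⟨A, hAfin, hAS⟩ ⟨B, hBfin, hBS⟩
    obtain ⟨t, ht⟩ : B.FG := Module.Finite.iff_fg.mp hBfin
    set s : Set N := (t : Set N) with hs
    set B' : Submodule R M := Submodule.span R (Function.surjInv hg '' s) with hB'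
    set C : Submodule R M := A.map f ⊔ B' with hC
    have hCfg : C.FG := by
      refine Submodule.FG.sup ?_ ?_
      · exact Submodule.FG.map f (Module.Finite.iff_fg.mp hAfin)
      · exact Submodule.fg_span ((t.finite_toSet).image _)
    haveI hCfin : Module.Finite R C := Module.Finite.iff_fg.mpr hCfg
    -- g maps C onto B
    have hgf : ∀ l : L, g (f l) = 0 := by
      intro l
      have : f l ∈ LinearMap.ker g := hfg ▸ LinearMap.mem_range_self f l
      simpa using this
    have hmapC : C.map g = B := by
      rw [hC, Submodule.map_sup]
      have h1 : (A.map f).map g = ⊥ := by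
        rw [eq_bot_iff]
        rintro x ⟨y, ⟨a, _, rfl⟩, rfl⟩
        simp [hgf a]
      have h2 : B'.map g = B := by
        rw [hB', Submodule.map_span, ← Set.image_comp]
        have : (⇑g ∘ Function.surjInv hg) '' s = s := by
          ext x
          simp only [Set.mem_image, Function.comp_apply, Function.surjInv_eq hg]
          exact ⟨fun ⟨y, hy, h⟩ => h ▸ hy, fun hx => ⟨x, hx, rfl⟩⟩
        rw [this, hs, ht]
      rw [h1, h2, bot_sup_eq]
    have hleC : C ≤ B.comap g := by
      rw [← Submodule.map_le_iff_le_comap, hmapC]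
    set gbar : (M ⧸ C) →ₗ[R] (N ⧸ B) := Submodule.mapQ C B g hleC with hgbar
    have hgbarSurj : Function.Surjective gbar := by
      intro y
      obtain ⟨n, rfl⟩ := Submodule.Quotient.mk_surjective B y
      obtain ⟨m, rfl⟩ := hg n
      exact ⟨Submodule.Quotient.mk m, by simp [hgbar, Submodule.mapQ_apply]⟩
    set K := LinearMap.ker gbar with hK
    -- K is a quotient of L/A
    have hψker : A ≤ LinearMap.ker (C.mkQ.comp f) := by
      intro a ha
      simp only [LinearMap.mem_ker, LinearMap.comp_apply, Submodule.mkQ_apply,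
        Submodule.Quotient.mk_eq_zero]
      exact le_sup_left (α := Submodule R M) (Submodule.mem_map_of_mem ha)
    set ψ : (L ⧸ A) →ₗ[R] (M ⧸ C) := Submodule.liftQ A (C.mkQ.comp f) hψker with hψ
    have hrange : LinearMap.range ψ = K := by
      rw [hψ, Submodule.range_liftQ, LinearMap.range_comp]
      apply le_antisymm
      · rintro x ⟨y, ⟨l, rfl⟩, rfl⟩
        simp only [hK, LinearMap.mem_ker, hgbar, Submodule.mkQ_apply, Submodule.mapQ_apply,
          hgf l, Submodule.Quotient.mk_eq_zero]
        exact B.zero_mem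
      · intro x hx
        obtain ⟨m, rfl⟩ := Submodule.Quotient.mk_surjective C x
        have hgm : g m ∈ B := by
          have : gbar (Submodule.Quotient.mk m) = 0 := hx
          rw [hgbar, Submodule.mapQ_apply, Submodule.Quotient.mk_eq_zero] at this
          exact this
        rw [← hmapC] at hgm
        obtain ⟨c, hcC, hcg⟩ := hgm
        have : m - c ∈ LinearMap.range f := by
          rw [hfg]
          simp [LinearMap.mem_ker, map_sub, hcg]
        obtain ⟨l, hl⟩ := this
        refine ⟨f l, ⟨l, rfl⟩, ?_⟩
        rw [Submodule.mkQ_apply, Submodule.Quotient.eq]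
        rw [hl]
        simpa using C.neg_mem hcC
    have hKS : S K := by
      have hmem : ∀ x, ψ x ∈ K := fun x => hrange ▸ LinearMap.mem_range_self ψ x
      refine hS.ofSurjective (LinearMap.codRestrict K ψ hmem) ?_ hAS
      rintro ⟨k, hk⟩
      rw [← hrange] at hk
      obtain ⟨x, hx⟩ := hk
      exact ⟨x, Subtype.ext hx⟩
    exact ⟨C, hCfin, hS.extClosed K (M ⧸ C) (N ⧸ B) K.subtype gbar K.injective_subtype
      hgbarSurj (Submodule.range_subtype K) hKS hBS⟩
end

section
/- Let R be a commutative noetherian integral domain that is not a field, with field of fractions Q. Then, as an R-module, Q admits a finitely generated submodule N with Q/N torsion (indeed Q ⊗_R Q is one-dimensional over Q), but there exists no torsion R-submodule T of Q such that Q/T is a finitely generated R-module. -/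
/-!
Every `a / b ∈ Q` is killed modulo `R ∙ 1` by `b`, and `Q ⊗_R Q ≅ Q` because `Q` is a localization
of `R`. Since `Q` is torsion-free, a torsion submodule `T` is zero; so `Q / T` finitely generated
would make `Q` a finite, hence integral, extension of `R`, and then `R` is a field.
-/

universe u

open Module TensorProduct nonZeroDivisors

theorem Submodule.eq_bot_of_isTorsion {R M : Type*} [CommRing R] [AddCommGroup M] [Module R M]
    [IsTorsionFree R M] {T : Submodule R M} (hT : IsTorsion R T) : T = ⊥ := by
  refine (Submodule.eq_bot_iff T).mpr fun x hx => ?_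
  obtain ⟨r, hr⟩ := @hT ⟨x, hx⟩
  exact (isRegular_iff_mem_nonZeroDivisors.mpr r.2).smul_eq_zero_iff_right.mp congr($hr.1)

theorem isField_of_finite_of_faithfulSMul (R K : Type*) [CommRing R] [Field K] [Algebra R K]
    [FaithfulSMul R K] [Module.Finite R K] : IsField R :=
  isField_of_isIntegral_of_isField (FaithfulSMul.algebraMap_injective R K) (Field.toIsField K)

namespace IsFractionRing

variable (R : Type*) {K : Type*} [CommRing R] [CommRing K] [Algebra R K] [IsFractionRing R K]

theorem isTorsion_quotient_span_one : IsTorsion R (K ⧸ R ∙ (1 : K)) := by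
  intro x
  obtain ⟨q, rfl⟩ := Submodule.Quotient.mk_surjective _ x
  obtain ⟨⟨a, b⟩, rfl⟩ := IsLocalization.mk'_surjective R⁰ q
  refine ⟨b, ?_⟩
  rw [Submonoid.smul_def, ← Submodule.Quotient.mk_smul, Submodule.Quotient.mk_eq_zero,
    Algebra.smul_def, IsLocalization.mk'_spec', Algebra.algebraMap_eq_smul_one]
  exact Submodule.smul_mem _ a (Submodule.mem_span_singleton_self _)

theorem finrank_tensorProduct_self [Nontrivial K] : finrank K (K ⊗[R] K) = 1 := by
  rw [(IsLocalization.algebraLid R⁰ K K).toLinearEquiv.finrank_eq, finrank_self]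

end IsFractionRing

theorem fractionRing_minimax_not_maxmini_general
    {R : Type u} [CommRing R] [IsDomain R] (hR : ¬IsField R) :
    (∃ N : Submodule R (FractionRing R), N.FG ∧ Module.IsTorsion R (FractionRing R ⧸ N)) ∧
      Module.finrank (FractionRing R) (TensorProduct R (FractionRing R) (FractionRing R)) = 1 ∧
      ¬∃ T : Submodule R (FractionRing R),
        Module.IsTorsion R ↥T ∧ Module.Finite R (FractionRing R ⧸ T) := by
  refine ⟨⟨_, Submodule.fg_span_singleton 1, IsFractionRing.isTorsion_quotient_span_one R⟩,
    IsFractionRing.finrank_tensorProduct_self R, ?_⟩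
  rintro ⟨T, hT, hfin⟩
  obtain rfl := Submodule.eq_bot_of_isTorsion hT
  have : Module.Finite R (FractionRing R) := .equiv (Submodule.quotEquivOfEqBot ⊥ rfl)
  exact hR (isField_of_finite_of_faithfulSMul R (FractionRing R))

/-- Let `R` be a noetherian domain that is not a field, with fraction field `Q`. Then `Q`, as an
`R`-module, has a finitely generated submodule with torsion quotient (indeed `Q ⊗_R Q` is
one-dimensional over `Q`), but there is no torsion `R`-submodule `T ⊆ Q` with `Q/T` a finitely
generated `R`-module. -/
theorem fractionRing_minimax_not_maxmini
    {R : Type u} [CommRing R] [IsDomain R] [IsNoetherianRing R] (hR : ¬IsField R) :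
    (∃ N : Submodule R (FractionRing R), N.FG ∧ Module.IsTorsion R (FractionRing R ⧸ N)) ∧
      Module.finrank (FractionRing R) (TensorProduct R (FractionRing R) (FractionRing R)) = 1 ∧
      ¬∃ T : Submodule R (FractionRing R),
        Module.IsTorsion R ↥T ∧ Module.Finite R (FractionRing R ⧸ T) :=
  fractionRing_minimax_not_maxmini_general hR
end

section
/- Let R be a commutative noetherian ring and let S₁ and S₂ be Serre classes of R-modules such that every module in S₁ embeds into an injective module belonging to S₁, and every module in S₂ embeds into an injective module belonging to S₂. Then every module in the extension class (S₁, S₂) embeds into an injective R-module belonging to (S₁, S₂). -/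
universe u v

lemma prod_injective_aux {R : Type u} [CommRing R] (A B : Type v)
    [AddCommGroup A] [Module R A] [AddCommGroup B] [Module R B]
    (hA : Module.Injective R A) (hB : Module.Injective R B) :
    Module.Injective R (A × B) where
  out X Y _ _ _ _ f hf g := by
    obtain ⟨hA', hA'eq⟩ := hA.out f hf ((LinearMap.fst R A B).comp g)
    obtain ⟨hB', hB'eq⟩ := hB.out f hf ((LinearMap.snd R A B).comp g)
    exact ⟨hA'.prod hB', fun x => Prod.ext (hA'eq x) (hB'eq x)⟩

/-- If the Serre classes `S₁` and `S₂` are both closed under injective hulls (every module of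
the class embeds into an injective module of the class), then every module of the extension
class `(S₁, S₂)` embeds into an injective module belonging to `(S₁, S₂)`. -/
theorem extensionClass_closed_under_injective_hulls
    {R : Type u} [CommRing R] [IsNoetherianRing R]
    (S₁ S₂ : ∀ (M : Type v) [AddCommGroup M] [Module R M], Prop)
    (h₁ : IsSerreClass R S₁) (h₂ : IsSerreClass R S₂)
    (hinj₁ : ∀ (M : Type v) [AddCommGroup M] [Module R M], S₁ M →
      ∃ E : ModuleCat.{v} R, Module.Injective R E ∧ S₁ E ∧
        ∃ f : M →ₗ[R] E, Function.Injective f)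
    (hinj₂ : ∀ (M : Type v) [AddCommGroup M] [Module R M], S₂ M →
      ∃ E : ModuleCat.{v} R, Module.Injective R E ∧ S₂ E ∧
        ∃ f : M →ₗ[R] E, Function.Injective f) :
    ∀ (M : Type v) [AddCommGroup M] [Module R M], ExtensionClass S₁ S₂ M →
      ∃ E : ModuleCat.{v} R, Module.Injective R E ∧ ExtensionClass S₁ S₂ E ∧
        ∃ f : M →ₗ[R] E, Function.Injective f := by
  intro M _ _ hM
  obtain ⟨N, hN1, hN2⟩ := hM
  obtain ⟨E₁, hE₁inj, hE₁S, f₁, hf₁⟩ := hinj₁ N hN1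
  obtain ⟨E₂, hE₂inj, hE₂S, f₂, hf₂⟩ := hinj₂ (M ⧸ N) hN2
  refine ⟨ModuleCat.of R (E₁ × E₂), prod_injective_aux E₁ E₂ hE₁inj hE₂inj, ?_, ?_⟩
  · refine ⟨LinearMap.range (LinearMap.inl R E₁ E₂), ?_, ?_⟩
    · exact h₁.isoClosed E₁ _
        (LinearEquiv.ofInjective _ (LinearMap.inl_injective (R := R) (M := E₁) (M₂ := E₂))) hE₁S
    · refine h₂.isoClosed E₂ _ ?_ hE₂S
      exact LinearEquiv.symm
        ((Submodule.quotEquivOfEq _ _ (LinearMap.range_inl R E₁ E₂)).trans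
          ((LinearMap.snd R E₁ E₂).quotKerEquivOfSurjective (fun b => ⟨(0, b), rfl⟩)))
  · obtain ⟨g, hg⟩ := hE₁inj.out N.subtype Subtype.val_injective f₁
    refine ⟨LinearMap.prod g (f₂.comp N.mkQ), ?_⟩
    intro x y hxy
    rw [← sub_eq_zero]
    set z := x - y with hz
    have hz0 : (LinearMap.prod g (f₂.comp N.mkQ)) z = 0 := by
      rw [hz, map_sub]; exact sub_eq_zero_of_eq hxy
    have h2 : f₂ (N.mkQ z) = 0 := congrArg Prod.snd hz0
    have hzN : z ∈ N := by
      rw [← Submodule.Quotient.mk_eq_zero]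
      exact hf₂ (by simpa using h2)
    have h1 : g z = 0 := congrArg Prod.fst hz0
    have : f₁ ⟨z, hzN⟩ = 0 := by rw [← hg ⟨z, hzN⟩]; exact h1
    have : (⟨z, hzN⟩ : N) = 0 := hf₁ (by simpa using this)
    simpa using congrArg Subtype.val this
end
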